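/- For any non-empty finite binary word α, there exists a finite product w of the maps t_{00,01}, t_{01,10}, t_{10,11}, t_{1,00} and their inverses such that the image under w of the clopen set 00𝔠 equals α𝔠. -/
import Mathlib


/-- Finite binary words. -/
abbrev Word := List Bool
/-- Cantor space `{0,1}^ℕ`. -/
abbrev Cantor := ℕ → Bool

/-- `x` has the finite word `α` as a prefix. -/
def hasPrefix (α : Word) (x : Cantor) : Prop :=
  ∀ i, i < α.length → x i = α.getD i false

instance (α : Word) (x : Cantor) : Decidable (hasPrefix α x) :=
  Nat.decidableBallLT _ _

/-- Concatenate a finite word with an infinite sequence. -/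
def wcat (α : Word) (y : Cantor) : Cantor :=
  fun n => if n < α.length then α.getD n false else y (n - α.length)

/-- The prefix transposition `t_{α,β}` of Cantor space. -/
def t (α β : Word) (x : Cantor) : Cantor :=
  if hasPrefix α x then wcat β (fun n => x (n + α.length))
  else if hasPrefix β x then wcat α (fun n => x (n + β.length))
  else x

/-- `α ⊥ β`: neither word is a prefix of the other. -/
def Incomp (α β : Word) : Prop := ¬ α <+: β ∧ ¬ β <+: α

/-- The basic clopen set `μ𝔠` of sequences with prefix `μ`. -/
def prefSet (μ : Word) : Set Cantor := {x | hasPrefix μ x}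

-- basic lemmas
lemma hp_wcat (μ : Word) (y : Cantor) : hasPrefix μ (wcat μ y) := by
  intro i hi; simp [wcat, hi]

lemma wcat_shift (μ : Word) (y : Cantor) : (fun n => wcat μ y (n + μ.length)) = y := by
  funext n; simp [wcat]

lemma eq_wcat_of_hasPrefix {μ : Word} {x : Cantor} (h : hasPrefix μ x) :
    x = wcat μ (fun n => x (n + μ.length)) := by
  funext n
  by_cases hn : n < μ.length
  · simp [wcat, hn, h n hn]
  · simp only [wcat, hn, if_neg]
    congr 1
    omega

lemma comparable_of_hasPrefix {μ ν : Word} {x : Cantor} (h1 : hasPrefix μ x)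
    (h2 : hasPrefix ν x) : μ <+: ν ∨ ν <+: μ := by
  rcases le_total μ.length ν.length with hl | hl
  · left
    have : μ = ν.take μ.length := by
      apply List.ext_getElem
      · simp; omega
      · intro i h3 h4
        have e1 := h1 i (by omega)
        have e2 := h2 i (by omega)
        simp [List.getD_eq_getElem?_getD, List.getElem?_eq_getElem, h3, (by omega : i < ν.length)] at e1 e2
        simp [e1 ▸ e2]
    exact this ▸ List.take_prefix _ _
  · right
    have : ν = μ.take ν.length := by
      apply List.ext_getElem
      · simp; omega
      · intro i h3 h4
        have e1 := h1 i (by omega)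
        have e2 := h2 i (by omega)
        simp [List.getD_eq_getElem?_getD, List.getElem?_eq_getElem, h3, (by omega : i < μ.length)] at e1 e2
        simp [e1 ▸ e2]
    exact this ▸ List.take_prefix _ _

lemma not_hasPrefix_of_incomp {μ ν : Word} {x : Cantor} (hinc : Incomp μ ν)
    (h : hasPrefix μ x) : ¬ hasPrefix ν x := fun h2 =>
  (comparable_of_hasPrefix h h2).elim hinc.1 hinc.2

lemma hasPrefix_append {μ δ : Word} {x : Cantor} :
    hasPrefix (μ ++ δ) x ↔ hasPrefix μ x ∧ hasPrefix δ (fun n => x (n + μ.length)) := by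
  constructor
  · intro h
    refine ⟨fun i hi => ?_, fun i hi => ?_⟩
    · have := h i (by simp; omega)
      rwa [List.getD_append _ _ _ _ hi] at this
    · have := h (i + μ.length) (by simp; omega)
      rwa [List.getD_append_right _ _ _ _ (by omega), Nat.add_sub_cancel] at this
  · rintro ⟨h1, h2⟩ i hi
    simp only [List.length_append] at hi
    by_cases hi2 : i < μ.length
    · rw [List.getD_append _ _ _ _ hi2]; exact h1 i hi2
    · rw [List.getD_append_right _ _ _ _ (by omega)]
      have := h2 (i - μ.length) (by omega)
      simpa [Nat.sub_add_cancel (by omega : μ.length ≤ i)] using this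

lemma t_apply_left {μ ν : Word} {x : Cantor} (h : hasPrefix μ x) :
    t μ ν x = wcat ν (fun n => x (n + μ.length)) := by simp [t, h]

lemma t_apply_right {μ ν : Word} {x : Cantor} (hinc : Incomp μ ν) (h : hasPrefix ν x) :
    t μ ν x = wcat μ (fun n => x (n + ν.length)) := by
  have : ¬ hasPrefix μ x := fun h2 => not_hasPrefix_of_incomp hinc h2 h
  simp [t, h, this]

lemma t_apply_fixed {μ ν : Word} {x : Cantor} (h1 : ¬ hasPrefix μ x) (h2 : ¬ hasPrefix ν x) :
    t μ ν x = x := by simp [t, h1, h2]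

lemma img_sub {μ ν : Word} (hinc : Incomp μ ν) (δ : Word) :
    t μ ν '' prefSet (μ ++ δ) = prefSet (ν ++ δ) := by
  ext x
  constructor
  · rintro ⟨z, hz, rfl⟩
    rw [prefSet, Set.mem_setOf_eq, hasPrefix_append] at hz ⊢
    obtain ⟨h1, h2⟩ := hz
    rw [t_apply_left h1]
    exact ⟨hp_wcat _ _, by rwa [wcat_shift]⟩
  · intro hx
    rw [prefSet, Set.mem_setOf_eq, hasPrefix_append] at hx
    obtain ⟨h1, h2⟩ := hx
    refine ⟨wcat μ (fun n => x (n + ν.length)), ?_, ?_⟩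
    · rw [prefSet, Set.mem_setOf_eq, hasPrefix_append]
      exact ⟨hp_wcat _ _, by rwa [wcat_shift]⟩
    · rw [t_apply_left (hp_wcat _ _), wcat_shift, ← eq_wcat_of_hasPrefix h1]

lemma t_comm {μ ν : Word} (hinc : Incomp μ ν) : t μ ν = t ν μ := by
  funext x
  by_cases h1 : hasPrefix μ x
  · rw [t_apply_left h1, t_apply_right hinc.symm h1]
  · by_cases h2 : hasPrefix ν x
    · rw [t_apply_right hinc h2, t_apply_left h2]
    · rw [t_apply_fixed h1 h2, t_apply_fixed h2 h1]

lemma img_sub' {μ ν : Word} (hinc : Incomp μ ν) (δ : Word) :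
    t μ ν '' prefSet (ν ++ δ) = prefSet (μ ++ δ) := by
  rw [t_comm hinc]; exact img_sub hinc.symm δ

lemma img_fixed {μ ν γ : Word} (h1 : Incomp γ μ) (h2 : Incomp γ ν) :
    t μ ν '' prefSet γ = prefSet γ := by
  have key : ∀ x ∈ prefSet γ, t μ ν x = x := by
    intro x hx
    exact t_apply_fixed (fun h => not_hasPrefix_of_incomp h1 hx h)
      (fun h => not_hasPrefix_of_incomp h2 hx h)
  ext x
  constructor
  · rintro ⟨z, hz, rfl⟩; rw [key z hz]; exact hz
  · intro hx; exact ⟨x, hx, key x hx⟩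

lemma prefSet_split (γ : Word) :
    prefSet γ = prefSet (γ ++ [false]) ∪ prefSet (γ ++ [true]) := by
  have single : ∀ (b : Bool) (x : Cantor),
      hasPrefix (γ ++ [b]) x ↔ hasPrefix γ x ∧ x γ.length = b := by
    intro b x
    rw [hasPrefix_append]
    constructor
    · rintro ⟨h1, h2⟩
      have := h2 0 (by simp)
      simp at this
      exact ⟨h1, this⟩
    · rintro ⟨h1, h2⟩
      refine ⟨h1, fun i hi => ?_⟩
      simp at hi
      subst hi
      simpa using h2
  ext x
  simp only [prefSet, Set.mem_setOf_eq, Set.mem_union, single]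
  cases h : x γ.length <;> tauto

section main

local notation "ta" => t [false, false] [false, true]
local notation "tb" => t [false, true] [true, false]
local notation "tc" => t [true, false] [true, true]
local notation "td" => t [true] [false, false]

local notation "G" => ({ta, tb, tc, td} : Set (Cantor → Cantor))

lemma inc_a : Incomp [false, false] [false, true] := by constructor <;> decide
lemma inc_b : Incomp [false, true] [true, false] := by constructor <;> decide
lemma inc_c : Incomp [true, false] [true, true] := by constructor <;> decide
lemma inc_d : Incomp [true] [false, false] := by constructor <;> decide

lemma reach00 (δ : Word) : ∃ l : List (Cantor → Cantor),
    (∀ f ∈ l, f ∈ G) ∧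
      (l.foldr (· ∘ ·) id) '' prefSet [false, false] = prefSet ([false, false] ++ δ) := by
  induction δ with
  | nil => exact ⟨[], by simp, by simp⟩
  | cons dd δ' ih =>
    obtain ⟨l', hm', him'⟩ := ih
    cases dd
    · refine ⟨td :: tb :: ta :: l', ?_, ?_⟩
      · intro f hf
        simp only [List.mem_cons] at hf
        rcases hf with rfl | rfl | rfl | hf
        · simp
        · simp
        · simp
        · exact hm' f hf
      · simp only [List.foldr_cons, Set.image_comp]
        rw [him']
        rw [img_sub inc_a δ']
        rw [img_sub inc_b δ']
        have : ([true, false] ++ δ' : Word) = [true] ++ (false :: δ') := rfl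
        rw [this, img_sub inc_d (false :: δ')]
    · refine ⟨td :: tc :: tb :: ta :: l', ?_, ?_⟩
      · intro f hf
        simp only [List.mem_cons] at hf
        rcases hf with rfl | rfl | rfl | rfl | hf
        · simp
        · simp
        · simp
        · simp
        · exact hm' f hf
      · simp only [List.foldr_cons, Set.image_comp]
        rw [him']
        rw [img_sub inc_a δ']
        rw [img_sub inc_b δ']
        rw [img_sub inc_c δ']
        have : ([true, true] ++ δ' : Word) = [true] ++ (true :: δ') := rfl
        rw [this, img_sub inc_d (true :: δ')]

lemma pf00 : prefSet ([false, false] : Word) = prefSet ([false, false] ++ ([] : Word)) := by simp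

theorem stmt16 (α : Word) (hα : α ≠ []) :
    ∃ l : List (Cantor → Cantor),
      (∀ f ∈ l, f ∈ ({t [false, false] [false, true], t [false, true] [true, false],
          t [true, false] [true, true], t [true] [false, false]} : Set (Cantor → Cantor))) ∧
        (l.foldr (· ∘ ·) id) '' prefSet [false, false] = prefSet α := by
  match α with
  | [] => exact absurd rfl hα
  | [true] =>
    refine ⟨[td], by simp, ?_⟩
    simp only [List.foldr_cons, List.foldr_nil, Function.comp_id]
    rw [pf00, img_sub' inc_d]
    simp
  | [false] =>
    refine ⟨[tb, tc, ta, tb, td], by intro f hf; simp at hf; rcases hf with rfl|rfl|rfl|rfl|rfl <;> simp, ?_⟩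
    simp only [List.foldr_cons, List.foldr_nil, Function.comp_id, Set.image_comp]
    rw [pf00, img_sub' inc_d]
    have e1 : prefSet ([true] ++ ([] : Word)) = prefSet [true, false] ∪ prefSet [true, true] := by
      simpa using prefSet_split [true]
    rw [e1, Set.image_union]
    have hb1 : tb '' prefSet [true, false] = prefSet [false, true] := by
      simpa using img_sub' inc_b []
    have hb2 : tb '' prefSet [true, true] = prefSet [true, true] :=
      img_fixed (by constructor <;> decide) (by constructor <;> decide)
    rw [hb1, hb2, Set.image_union]
    have ha1 : ta '' prefSet [false, true] = prefSet [false, false] := by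
      simpa using img_sub' inc_a []
    have ha2 : ta '' prefSet [true, true] = prefSet [true, true] :=
      img_fixed (by constructor <;> decide) (by constructor <;> decide)
    rw [ha1, ha2, Set.image_union]
    have hc1 : tc '' prefSet [false, false] = prefSet [false, false] :=
      img_fixed (by constructor <;> decide) (by constructor <;> decide)
    have hc2 : tc '' prefSet [true, true] = prefSet [true, false] := by
      simpa using img_sub' inc_c []
    rw [hc1, hc2, Set.image_union]
    have hb3 : tb '' prefSet [false, false] = prefSet [false, false] :=
      img_fixed (by constructor <;> decide) (by constructor <;> decide)
    have hb4 : tb '' prefSet [true, false] = prefSet [false, true] := by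
      simpa using img_sub' inc_b []
    rw [hb3, hb4]
    simpa using (prefSet_split [false]).symm
  | false :: false :: δ =>
    obtain ⟨l, hm, him⟩ := reach00 δ
    exact ⟨l, hm, him⟩
  | false :: true :: δ =>
    obtain ⟨l, hm, him⟩ := reach00 δ
    refine ⟨ta :: l, ?_, ?_⟩
    · intro f hf
      simp only [List.mem_cons] at hf
      rcases hf with rfl | hf
      · simp
      · exact hm f hf
    · simp only [List.foldr_cons, Set.image_comp]
      rw [him, img_sub inc_a δ]
      rfl
  | true :: false :: δ =>
    obtain ⟨l, hm, him⟩ := reach00 δ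
    refine ⟨tb :: ta :: l, ?_, ?_⟩
    · intro f hf
      simp only [List.mem_cons] at hf
      rcases hf with rfl | rfl | hf
      · simp
      · simp
      · exact hm f hf
    · simp only [List.foldr_cons, Set.image_comp]
      rw [him, img_sub inc_a δ, img_sub inc_b δ]
      rfl
  | true :: true :: δ =>
    obtain ⟨l, hm, him⟩ := reach00 δ
    refine ⟨tc :: tb :: ta :: l, ?_, ?_⟩
    · intro f hf
      simp only [List.mem_cons] at hf
      rcases hf with rfl | rfl | rfl | hf
      · simp
      · simp
      · simp
      · exact hm f hf
    · simp only [List.foldr_cons, Set.image_comp]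
      rw [him, img_sub inc_a δ, img_sub inc_b δ, img_sub inc_c δ]
      rfl

end main
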